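/- arXiv:2312.06443 — 2 statements merged into one kernel-verified Lean document; each statement's English description precedes it below -/
import Mathlib

section
/- Consider a combinatorial auction with nonempty winner set W, and let π^BLO be the leximin-optimal element of its core U. Then for every bidder i ∈ N, π^BLO_i ≥ (1/|W|) · π*_i, where π*_i = max{π_i : π ∈ U} is the maximum utility bidder i attains over the core. -/
/-!
Every core vector gives bidder `i` at most his marginal contribution
`f = w(N) - w(N \ {i})`. If `π^BLO_i < f / |W| =: s`, raise bidder `i` to `s` and cap every
other bidder at `s`. The result stays in the core: a coalition `S ∋ i` only sees smaller
payments, and for `S ∌ i` the total payment is at most `|W| * s = f ≤ w(N) - w(S)`, since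
losers get nothing in the core and `w` is monotone. But it leximin-dominates `π^BLO`,
because it agrees with `π^BLO` below the level `π^BLO_i` and has one fewer entry at that level.
-/

/-- The vector `x` sorted in nondecreasing order. -/
noncomputable def sortVec {n : ℕ} (x : Fin n → ℝ) : Fin n → ℝ := x ∘ Tuple.sort x

/-- `x` leximin-dominates `y`. -/
def LexDom {n : ℕ} (x y : Fin n → ℝ) : Prop :=
  ∃ k : Fin n, (∀ j : Fin n, j < k → sortVec x j = sortVec y j) ∧ sortVec y k < sortVec x k

/-- The core polytope of a coalition value function `w`. -/
def CorePoly {n : ℕ} (w : Finset (Fin n) → ℝ) : Set (Fin n → ℝ) :=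
  {π | (∀ i, 0 ≤ π i) ∧ ∀ S : Finset (Fin n), ∑ i ∈ Finset.univ \ S, π i ≤ w Finset.univ - w S}

/-- An allocation to the coalition `S`: pairwise disjoint bundles of items. -/
def IsAlloc {n m : ℕ} (S : Finset (Fin n)) (a : Fin n → Finset (Fin m)) : Prop :=
  ∀ i ∈ S, ∀ j ∈ S, i ≠ j → Disjoint (a i) (a j)

/-- The coalition value: the maximum total value over allocations to `S`. -/
noncomputable def coalW {n m : ℕ} (v : Fin n → Finset (Fin m) → ℝ) (S : Finset (Fin n)) : ℝ :=
  sSup (Set.image (fun a : Fin n → Finset (Fin m) => ∑ i ∈ S, v i (a i)) {a | IsAlloc S a})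

/-- The set of winners: bidders whose removal strictly decreases the optimal welfare. -/
noncomputable def winners {n m : ℕ} (v : Fin n → Finset (Fin m) → ℝ) : Finset (Fin n) :=
  @Finset.filter _ (fun i => coalW v (Finset.univ \ {i}) < coalW v Finset.univ)
    (Classical.decPred _) Finset.univ

open Finset

section Leximin

variable {n : ℕ}

theorem Monotone.apply_le_iff_lt_card_filter {α : Type*} [LinearOrder α] {f : Fin n → α}
    (hf : Monotone f) (k : Fin n) (c : α) : f k ≤ c ↔ (k : ℕ) < #{j | f j ≤ c} := by
  constructor
  · intro hk
    calc (k : ℕ) < #(Iic k) := by simp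
      _ ≤ #{j | f j ≤ c} :=
        card_le_card fun j hj => mem_filter.2 ⟨mem_univ j, (hf (mem_Iic.1 hj)).trans hk⟩
  · intro hk
    by_contra! hck
    have hsub : ({j | f j ≤ c} : Finset (Fin n)) ⊆ Iio k := fun j hj =>
      mem_Iio.2 <| lt_of_not_ge fun hkj => (hck.trans_le (hf hkj)).not_ge (mem_filter.1 hj).2
    simpa using hk.trans_le (card_le_card hsub)

theorem sortVec_le_iff (x : Fin n → ℝ) (k : Fin n) (c : ℝ) :
    sortVec x k ≤ c ↔ (k : ℕ) < #{j | x j ≤ c} := by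
  unfold sortVec
  rw [(Tuple.monotone_sort x).apply_le_iff_lt_card_filter]
  congr! 1
  exact card_equiv (Tuple.sort x) (by simp)

theorem lexDom_of_card_filter_lt (x y : Fin n → ℝ) (t : ℝ)
    (hbelow : ∀ c < t, #{j | y j ≤ c} = #{j | x j ≤ c})
    (hat : #{j | y j ≤ t} < #{j | x j ≤ t}) : LexDom y x := by
  have hk : #{j | y j ≤ t} < n := hat.trans_le ((card_filter_le _ _).trans_eq (card_fin n))
  refine ⟨⟨_, hk⟩, fun j hj => ?_, ?_⟩
  · have hj : (j : ℕ) < #{j | y j ≤ t} := hj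
    have hy : sortVec y j ≤ t := (sortVec_le_iff y j t).2 hj
    have hx : sortVec x j ≤ t := (sortVec_le_iff x j t).2 (hj.trans hat)
    have key : ∀ c < t, sortVec y j ≤ c ↔ sortVec x j ≤ c := fun c hc => by
      rw [sortVec_le_iff, sortVec_le_iff, hbelow c hc]
    apply le_antisymm
    · rcases hx.lt_or_eq with h | h
      · exact (key _ h).2 le_rfl
      · exact h ▸ hy
    · rcases hy.lt_or_eq with h | h
      · exact (key _ h).1 le_rfl
      · exact h ▸ hx
  · exact ((sortVec_le_iff x _ t).2 hat).trans_lt (lt_of_not_ge fun h =>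
      ((sortVec_le_iff y _ t).1 h).false)

theorem lexDom_update_min (x : Fin n → ℝ) (i : Fin n) {s : ℝ} (hs : x i < s) :
    LexDom (Function.update (fun j => min (x j) s) i s) x := by
  set y := Function.update (fun j => min (x j) s) i s
  have hle : ∀ c < s, ∀ j, y j ≤ c → x j ≤ c := by
    intro c hc j
    rcases eq_or_ne j i with rfl | hj
    · simp [y, hc.not_ge]
    · simp [y, hj, hc.not_ge]
  refine lexDom_of_card_filter_lt x y (x i) (fun c hc => ?_) (card_lt_card ?_)
  · refine congrArg card (filter_congr fun j _ => ⟨hle c (hc.trans hs) j, fun hj => ?_⟩)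
    rcases eq_or_ne j i with rfl | hji
    · exact absurd hj hc.not_ge
    · simpa [y, hji] using Or.inl hj
  · refine (ssubset_iff_of_subset fun j hj => ?_).2 ⟨i, by simp, by simp [y, hs.not_ge]⟩
    simpa using hle _ hs j (mem_filter.1 hj).2

end Leximin

section Auction

variable {n m : ℕ} (v : Fin n → Finset (Fin m) → ℝ)

theorem coalW_mono (hv0 : ∀ i, v i ∅ = 0) {S T : Finset (Fin n)} (hST : S ⊆ T) :
    coalW v S ≤ coalW v T := by
  classical
  refine csSup_le ⟨_, fun _ => ∅, fun _ _ _ _ _ => disjoint_empty_left _, rfl⟩ ?_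
  rintro _ ⟨a, ha, rfl⟩
  set a' : Fin n → Finset (Fin m) := fun j => if j ∈ S then a j else ∅
  have ha' : IsAlloc T a' := by
    intro i _ j _ hij
    simp only [a']
    split_ifs with hi hj hj
    · exact ha i hi j hj hij
    all_goals simp
  calc ∑ i ∈ S, v i (a i) = ∑ i ∈ S, v i (a' i) :=
        sum_congr rfl fun i hi => by simp [a', hi]
    _ = ∑ i ∈ T, v i (a' i) := sum_subset hST fun i _ hi => by simp [a', hi, hv0]
    _ ≤ coalW v T := le_csSup (Set.toFinite _).bddAbove ⟨a', ha', rfl⟩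

theorem le_marginal_of_mem_corePoly {w : Finset (Fin n) → ℝ} {π : Fin n → ℝ}
    (hπ : π ∈ CorePoly w) (j : Fin n) : π j ≤ w univ - w (univ \ {j}) := by
  simpa using hπ.2 (univ \ {j})

theorem eq_zero_of_notMem_winners {π : Fin n → ℝ} (hπ : π ∈ CorePoly (coalW v)) {j : Fin n}
    (hj : j ∉ winners v) : π j = 0 := by
  have hw : coalW v univ ≤ coalW v (univ \ {j}) := by simpa [winners] using hj
  linarith [le_marginal_of_mem_corePoly hπ j, hπ.1 j]

theorem update_min_mem_corePoly (hv0 : ∀ i, v i ∅ = 0) {π : Fin n → ℝ}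
    (hπ : π ∈ CorePoly (coalW v)) {i : Fin n} (hi : i ∈ winners v) {s : ℝ} (hs0 : 0 ≤ s)
    (hs : #(winners v) * s ≤ coalW v univ - coalW v (univ \ {i})) :
    Function.update (fun j => min (π j) s) i s ∈ CorePoly (coalW v) := by
  set y := Function.update (fun j => min (π j) s) i s
  have hy_of_ne : ∀ j ≠ i, y j = min (π j) s := fun j hj => by simp [y, hj]
  have hy0 : ∀ j, 0 ≤ y j := fun j => by
    rcases eq_or_ne j i with rfl | hj
    · simpa [y] using hs0
    · exact hy_of_ne j hj ▸ le_min (hπ.1 j) hs0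
  have hys : ∀ j, y j ≤ s := fun j => by
    rcases eq_or_ne j i with rfl | hj
    · simp [y]
    · exact hy_of_ne j hj ▸ min_le_right _ _
  refine ⟨hy0, fun S => ?_⟩
  by_cases hiS : i ∈ S
  · refine le_trans (sum_le_sum fun j hj => ?_) (hπ.2 S)
    have hji : j ≠ i := by rintro rfl; exact (mem_sdiff.1 hj).2 hiS
    exact hy_of_ne j hji ▸ min_le_left _ _
  · have hS : coalW v S ≤ coalW v (univ \ {i}) :=
      coalW_mono v hv0 (subset_sdiff.2 ⟨subset_univ S, by simpa using hiS⟩)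
    have hy_loser : ∀ j ∉ winners v, y j = 0 := fun j hj => by
      rw [hy_of_ne j (by rintro rfl; exact hj hi), eq_zero_of_notMem_winners v hπ hj,
        min_eq_left hs0]
    calc ∑ j ∈ univ \ S, y j ≤ ∑ j, y j :=
          sum_le_sum_of_subset_of_nonneg (subset_univ _) fun j _ _ => hy0 j
      _ = ∑ j ∈ winners v, y j := (sum_subset (subset_univ _) fun j _ hj => hy_loser j hj).symm
      _ ≤ #(winners v) • s := sum_le_card_nsmul _ _ _ fun j _ => hys j
      _ ≤ coalW v univ - coalW v S := by rw [nsmul_eq_mul]; linarith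

theorem marginal_le_card_winners_mul_of_leximin (hv0 : ∀ i, v i ∅ = 0) {π : Fin n → ℝ}
    (hπ : π ∈ CorePoly (coalW v)) (hopt : ∀ π' ∈ CorePoly (coalW v), ¬ LexDom π' π)
    (i : Fin n) : coalW v univ - coalW v (univ \ {i}) ≤ #(winners v) * π i := by
  set f := coalW v univ - coalW v (univ \ {i})
  by_contra! hlt
  have hi : i ∈ winners v := by
    have : 0 ≤ (#(winners v) : ℝ) * π i := mul_nonneg (Nat.cast_nonneg _) (hπ.1 i)
    simp only [winners, mem_filter, mem_univ, true_and]
    linarith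
  have hc : (0 : ℝ) < #(winners v) := by exact_mod_cast card_pos.2 ⟨i, hi⟩
  have hs : π i < f / #(winners v) := by rwa [lt_div_iff₀ hc, mul_comm]
  exact hopt _ (update_min_mem_corePoly v hv0 hπ hi ((hπ.1 i).trans hs.le)
    (mul_div_cancel₀ f hc.ne').le) (lexDom_update_min π i hs)

end Auction

theorem blo_single_utility_bound_general (n m : ℕ) (v : Fin n → Finset (Fin m) → ℝ)
    (hv0 : ∀ i, v i ∅ = 0)
    (πB : Fin n → ℝ)
    (hBmem : πB ∈ CorePoly (coalW v))
    (hBopt : ∀ π' ∈ CorePoly (coalW v), ¬ LexDom π' πB) :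
    ∀ i : Fin n,
      (1 / ((winners v).card : ℝ)) *
          sSup (Set.image (fun π : Fin n → ℝ => π i) (CorePoly (coalW v))) ≤ πB i := by
  intro i
  have hsup : sSup (Set.image (fun π : Fin n → ℝ => π i) (CorePoly (coalW v)))
      ≤ πB i * #(winners v) := by
    refine csSup_le ⟨πB i, πB, hBmem, rfl⟩ ?_
    rintro _ ⟨π, hπ, rfl⟩
    have hmarg := marginal_le_card_winners_mul_of_leximin v hv0 hBmem hBopt i
    linarith [le_marginal_of_mem_corePoly hπ i]
  rw [one_div_mul_eq_div]
  exact div_le_of_le_mul₀ (Nat.cast_nonneg _) (hBmem.1 i) hsup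

/-- In the BLO outcome, each bidder gets at least a 1/|W| fraction of his maximum core utility. -/
theorem blo_single_utility_bound (n m : ℕ) (v : Fin n → Finset (Fin m) → ℝ)
    (hv0 : ∀ i, v i ∅ = 0) (hvnn : ∀ i S, 0 ≤ v i S)
    (hW : (winners v).Nonempty)
    (πB : Fin n → ℝ)
    (hBmem : πB ∈ CorePoly (coalW v))
    (hBopt : ∀ π' ∈ CorePoly (coalW v), ¬ LexDom π' πB) :
    ∀ i : Fin n,
      (1 / ((winners v).card : ℝ)) *
          sSup (Set.image (fun π : Fin n → ℝ => π i) (CorePoly (coalW v))) ≤ πB i :=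
  blo_single_utility_bound_general n m v hv0 πB hBmem hBopt
end

section
/- The bound ∑_i π^BLO_i ≥ (4k / (k² + 2k + (k mod 2))) · ∑_i π^MRC_i is tight: for every integer k ≥ 3 there exists a combinatorial auction with winner set W of size k such that its leximin-optimal core element π^BLO and some maximizer π^MRC of total utility over the core U satisfy ∑_{i∈N} π^BLO_i = (4k / (k² + 2k + (k mod 2))) · ∑_{i∈N} π^MRC_i with ∑_{i∈N} π^MRC_i > 0. -/
/-!
Write `k = c + L` with `c = ⌊k/2⌋` and `L = ⌈k/2⌉`. Take `k` winners who each want one item,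
at value `c + 2`, while each loser wants the `c` shared items plus the item of one
middle winner, at value `(c + 1)²`. Coalition values are bounded from above by item prices (weak LP
duality: if `v i A ≤ π i + ρ(A)` for all `i, A`, then `w(S) ≤ ρ(M) + ∑_{i ∈ S} π i`); the prices
`c + 1` everywhere, resp. `c + 2` on shared items and `1` elsewhere, certify that `π^BLO = 1` on the
winners and `π^MRC = c + 1` on the middle winners lie in the core. Conversely, packings that serve
a loser show that in every core vector the losers get nothing and the `c + 1` rivals of each loser
get at most `c + 1` together. Summing over the `L` losers bounds the total utility by `(c + 1) L`,
and a core vector leximin-dominating `π^BLO` would give every winner at least `1` and some winner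
more, overshooting this bound on one rival set. The ratio `k / ((c + 1) L)` is the one claimed
since `4 (c + 1) L = k² + 2k + (k mod 2)`.
-/

open Finset

section General

variable {n m : ℕ}

lemma card_filter_sortVec (x : Fin n → ℝ) (p : ℝ → Prop) [DecidablePred p] :
    #{j | p (sortVec x j)} = #{i | p (x i)} :=
  card_equiv (Tuple.sort x) fun _ => by rw [mem_filter, mem_filter]; simp [sortVec]

lemma LexDom.exists_threshold {x y : Fin n → ℝ} (h : LexDom x y) :
    ∃ s, #{i | x i ≤ s} < #{i | y i ≤ s} ∧ ∀ s' < s, #{i | x i ≤ s'} ≤ #{i | y i ≤ s'} := by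
  obtain ⟨κ, hpre, hlt⟩ := h
  have hx : Monotone (sortVec x) := Tuple.monotone_sort x
  have hy : Monotone (sortVec y) := Tuple.monotone_sort y
  refine ⟨sortVec y κ, ?_, fun s' hs' => ?_⟩
  · rw [← card_filter_sortVec x (· ≤ sortVec y κ), ← card_filter_sortVec y (· ≤ sortVec y κ)]
    calc #{j | sortVec x j ≤ sortVec y κ} ≤ #(Iio κ) :=
          card_le_card fun j hj => by
            simp only [mem_filter, mem_univ, true_and] at hj
            exact mem_Iio.2 (lt_of_not_ge fun hκj => (hlt.trans_le (hx hκj)).not_ge hj)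
      _ < #(Iic κ) := by simp
      _ ≤ #{j | sortVec y j ≤ sortVec y κ} :=
          card_le_card fun j hj => by simpa using hy (mem_Iic.1 hj)
  · rw [← card_filter_sortVec x (· ≤ s'), ← card_filter_sortVec y (· ≤ s')]
    refine card_le_card fun j hj => ?_
    simp only [mem_filter, mem_univ, true_and] at hj ⊢
    rcases lt_or_ge j κ with hjκ | hκj
    · rwa [← hpre j hjκ]
    · linarith [hx hκj]

lemma le_coalW (v : Fin n → Finset (Fin m) → ℝ) {S : Finset (Fin n)} {a : Fin n → Finset (Fin m)}
    (ha : IsAlloc S a) : ∑ i ∈ S, v i (a i) ≤ coalW v S :=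
  le_csSup (Set.toFinite _).bddAbove ⟨a, ha, rfl⟩

lemma coalW_le_of_prices {v : Fin n → Finset (Fin m) → ℝ} {π : Fin n → ℝ} {ρ : Fin m → ℝ}
    (hρ : ∀ x, 0 ≤ ρ x) (hv : ∀ i A, v i A ≤ π i + ∑ x ∈ A, ρ x) (S : Finset (Fin n)) :
    coalW v S ≤ ∑ x, ρ x + ∑ i ∈ S, π i := by
  refine csSup_le ⟨_, fun _ => ∅, fun _ _ _ _ _ => disjoint_empty_left _, rfl⟩ ?_
  rintro _ ⟨a, ha, rfl⟩
  have hdisj : (S : Set (Fin n)).PairwiseDisjoint a := fun i hi j hj hij => ha i hi j hj hij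
  calc ∑ i ∈ S, v i (a i) ≤ ∑ i ∈ S, (π i + ∑ x ∈ a i, ρ x) := sum_le_sum fun i _ => hv i (a i)
    _ = ∑ x ∈ S.biUnion a, ρ x + ∑ i ∈ S, π i := by
      rw [sum_add_distrib, sum_biUnion hdisj, add_comm]
    _ ≤ ∑ x, ρ x + ∑ i ∈ S, π i :=
      add_le_add_left (sum_le_sum_of_subset_of_nonneg (subset_univ _) fun x _ _ => hρ x) _

lemma mem_corePoly_of_prices {v : Fin n → Finset (Fin m) → ℝ} {π : Fin n → ℝ} {ρ : Fin m → ℝ}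
    (hπ : ∀ i, 0 ≤ π i) (hρ : ∀ x, 0 ≤ ρ x) (hv : ∀ i A, v i A ≤ π i + ∑ x ∈ A, ρ x)
    (hbudget : ∑ x, ρ x + ∑ i, π i ≤ coalW v univ) : π ∈ CorePoly (coalW v) := by
  refine ⟨hπ, fun S => ?_⟩
  have hS := coalW_le_of_prices hρ hv S
  have hsplit := sum_sdiff (subset_univ S) (f := π)
  linarith

lemma sum_le_of_mem_corePoly {w : Finset (Fin n) → ℝ} {π : Fin n → ℝ} (hπ : π ∈ CorePoly w)
    (T : Finset (Fin n)) : ∑ i ∈ T, π i ≤ w univ - w (univ \ T) := by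
  simpa using hπ.2 (univ \ T)

def singleMinded (B : Fin n → Finset (Fin m)) (b : Fin n → ℝ) : Fin n → Finset (Fin m) → ℝ :=
  fun i A => if B i ⊆ A then b i else 0

variable {B : Fin n → Finset (Fin m)} {b : Fin n → ℝ}

lemma singleMinded_nonneg {i : Fin n} (hb : 0 ≤ b i) (A : Finset (Fin m)) :
    0 ≤ singleMinded B b i A := by
  unfold singleMinded; split_ifs <;> simp [hb]

lemma singleMinded_empty {i : Fin n} (hB : (B i).Nonempty) : singleMinded B b i ∅ = 0 := by
  simp [singleMinded, hB.ne_empty]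

lemma singleMinded_le {i : Fin n} {π : Fin n → ℝ} {ρ : Fin m → ℝ} (hπ : 0 ≤ π i) (hρ : ∀ x, 0 ≤ ρ x)
    (hb : b i ≤ π i + ∑ x ∈ B i, ρ x) (A : Finset (Fin m)) :
    singleMinded B b i A ≤ π i + ∑ x ∈ A, ρ x := by
  unfold singleMinded
  split_ifs with hA
  · exact hb.trans (by gcongr; exact fun x _ _ => hρ x)
  · exact add_nonneg hπ (sum_nonneg fun x _ => hρ x)

lemma sum_le_coalW_singleMinded (hb : ∀ i, 0 ≤ b i) {P S : Finset (Fin n)} (hPS : P ⊆ S)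
    (hP : IsAlloc P B) : ∑ i ∈ P, b i ≤ coalW (singleMinded B b) S := by
  set a : Fin n → Finset (Fin m) := fun i => if i ∈ P then B i else ∅
  have ha : IsAlloc S a := by
    intro i _ j _ hij
    simp only [a]
    split_ifs with hi hj hj
    · exact hP i hi j hj hij
    all_goals simp
  calc ∑ i ∈ P, b i = ∑ i ∈ P, singleMinded B b i (a i) :=
        sum_congr rfl fun i hi => by simp [singleMinded, a, hi]
    _ ≤ ∑ i ∈ S, singleMinded B b i (a i) :=
        sum_le_sum_of_subset_of_nonneg hPS fun i _ _ => singleMinded_nonneg (hb i) _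
    _ ≤ coalW (singleMinded B b) S := le_coalW _ ha

end General

namespace TightAuction

variable (c L : ℕ)

def winnerSet : Finset (Fin (c + L + L)) := {i | (i : ℕ) < c + L}

def sharedWinners : Finset (Fin (c + L + L)) := {i | (i : ℕ) < c}

def middle : Finset (Fin (c + L + L)) := {j | c ≤ (j : ℕ) ∧ (j : ℕ) < c + L}

def rivals (j : Fin (c + L + L)) : Finset (Fin (c + L + L)) := insert j (sharedWinners c L)

def sharedItems : Finset (Fin (c + L)) := {x | (x : ℕ) < c}

/- Bidders `i < c + L` are the winners, each wanting item `i` alone; bidder `j + L` with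
`j ∈ middle c L` is a loser wanting the shared items together with item `j`, so its rivals are
`rivals c L j`. -/
def bundle (i : Fin (c + L + L)) : Finset (Fin (c + L)) :=
  if h : (i : ℕ) < c + L then {⟨i, h⟩} else insert ⟨i - L, by omega⟩ (sharedItems c L)

noncomputable def bid (i : Fin (c + L + L)) : ℝ :=
  if (i : ℕ) < c + L then c + 2 else (c + 1) ^ 2

noncomputable abbrev valuation : Fin (c + L + L) → Finset (Fin (c + L)) → ℝ :=
  singleMinded (bundle c L) (bid c L)

noncomputable def piBLO (i : Fin (c + L + L)) : ℝ :=
  if (i : ℕ) < c + L then 1 else 0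

noncomputable def piMRC (i : Fin (c + L + L)) : ℝ :=
  if i ∈ middle c L then c + 1 else 0

noncomputable def priceMRC (x : Fin (c + L)) : ℝ :=
  if (x : ℕ) < c then c + 2 else 1

variable {c L}

lemma mem_bundle {i : Fin (c + L + L)} {x : Fin (c + L)} :
    x ∈ bundle c L i ↔
      (i : ℕ) < c + L ∧ (x : ℕ) = i ∨ c + L ≤ (i : ℕ) ∧ ((x : ℕ) < c ∨ (x : ℕ) + L = i) := by
  unfold bundle
  split_ifs with h <;> simp [sharedItems, Fin.ext_iff] <;> omega

lemma sum_bundle (ρ : Fin (c + L) → ℝ) (i : Fin (c + L + L)) :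
    ∑ x ∈ bundle c L i, ρ x =
      if h : (i : ℕ) < c + L then ρ ⟨i, h⟩
      else ρ ⟨i - L, by omega⟩ + ∑ x ∈ sharedItems c L, ρ x := by
  unfold bundle
  split_ifs with h
  · exact sum_singleton _ _
  · exact sum_insert (by simp [sharedItems]; omega)

lemma card_winnerSet : #(winnerSet c L) = c + L := by
  simp [winnerSet, Fin.card_filter_val_lt]

lemma card_sharedItems : #(sharedItems c L) = c := by
  simp [sharedItems, Fin.card_filter_val_lt]

lemma card_sharedWinners : #(sharedWinners c L) = c := by
  simp [sharedWinners, Fin.card_filter_val_lt]; omega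

lemma card_middle : #(middle c L) = L := by
  have h : middle c L = winnerSet c L \ sharedWinners c L := by
    ext j; simp [middle, winnerSet, sharedWinners]; omega
  rw [h, card_sdiff_of_subset (fun j => by simp [winnerSet, sharedWinners]; omega),
    card_winnerSet, card_sharedWinners]
  omega

lemma bid_nonneg (i : Fin (c + L + L)) : 0 ≤ bid c L i := by
  unfold bid; split_ifs <;> positivity

lemma bundle_nonempty (i : Fin (c + L + L)) : (bundle c L i).Nonempty := by
  unfold bundle; split_ifs <;> simp

lemma piBLO_nonneg (i : Fin (c + L + L)) : 0 ≤ piBLO c L i := by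
  unfold piBLO; split_ifs <;> norm_num

lemma piMRC_nonneg (i : Fin (c + L + L)) : 0 ≤ piMRC c L i := by
  unfold piMRC; split_ifs <;> positivity

lemma priceMRC_nonneg (x : Fin (c + L)) : 0 ≤ priceMRC c L x := by
  unfold priceMRC; split_ifs <;> positivity

lemma isAlloc_winnerSet : IsAlloc (winnerSet c L) (bundle c L) := by
  intro i hi j hj hij
  rw [disjoint_left]
  intro x hxi hxj
  simp only [winnerSet, mem_filter, mem_univ, true_and, mem_bundle] at hi hj hxi hxj
  exact hij (Fin.ext (by omega))

lemma sum_bid_winnerSet : ∑ i ∈ winnerSet c L, bid c L i = (c + L) * ((c : ℝ) + 2) := by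
  calc ∑ i ∈ winnerSet c L, bid c L i = ∑ _i ∈ winnerSet c L, ((c : ℝ) + 2) :=
        sum_congr rfl fun i hi => if_pos (by simpa [winnerSet] using hi)
    _ = (c + L) * ((c : ℝ) + 2) := by simp [card_winnerSet]; ring

lemma sum_piBLO : ∑ i, piBLO c L i = c + L := by
  simp [piBLO, sum_boole, Fin.card_filter_val_lt]

lemma valuation_le_piBLO (i : Fin (c + L + L)) (A : Finset (Fin (c + L))) :
    valuation c L i A ≤ piBLO c L i + ∑ _x ∈ A, ((c : ℝ) + 1) := by
  refine singleMinded_le (piBLO_nonneg i) (fun _ => by positivity) ?_ A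
  rw [sum_bundle]
  unfold bid piBLO
  split_ifs
  · linarith
  · simp only [sum_const, card_sharedItems, nsmul_eq_mul]
    linarith

lemma coalW_le_piBLO (S : Finset (Fin (c + L + L))) :
    coalW (valuation c L) S ≤ (c + L) * ((c : ℝ) + 1) + ∑ i ∈ S, piBLO c L i := by
  have h := coalW_le_of_prices (fun _ => by positivity) valuation_le_piBLO S
  rwa [sum_const, card_univ, Fintype.card_fin, nsmul_eq_mul, Nat.cast_add] at h

lemma coalW_univ : coalW (valuation c L) univ = (c + L) * ((c : ℝ) + 2) := by
  refine le_antisymm ?_ ?_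
  · linarith [coalW_le_piBLO (c := c) (L := L) univ, sum_piBLO (c := c) (L := L)]
  · rw [← sum_bid_winnerSet]
    exact sum_le_coalW_singleMinded bid_nonneg (subset_univ _) isAlloc_winnerSet

lemma coalW_sdiff_winner {i : Fin (c + L + L)} (hi : (i : ℕ) < c + L) :
    coalW (valuation c L) (univ \ {i}) ≤ coalW (valuation c L) univ - 1 := by
  have hsplit := sum_sdiff (subset_univ {i}) (f := piBLO c L)
  rw [sum_singleton, piBLO, if_pos hi, sum_piBLO] at hsplit
  linarith [coalW_le_piBLO (univ \ {i}), coalW_univ (c := c) (L := L)]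

lemma coalW_univ_le_sdiff_loser {i : Fin (c + L + L)} (hi : c + L ≤ (i : ℕ)) :
    coalW (valuation c L) univ ≤ coalW (valuation c L) (univ \ {i}) := by
  rw [coalW_univ, ← sum_bid_winnerSet]
  refine sum_le_coalW_singleMinded bid_nonneg (fun j hj => ?_) isAlloc_winnerSet
  simp only [winnerSet, mem_filter, mem_univ, true_and] at hj
  simp [Fin.ext_iff]; omega

lemma winners_eq : winners (valuation c L) = winnerSet c L := by
  ext i
  simp only [winners, winnerSet, mem_filter, mem_univ, true_and]
  constructor
  · intro h
    by_contra! hi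
    exact (coalW_univ_le_sdiff_loser hi).not_gt h
  · intro hi
    linarith [coalW_sdiff_winner hi]

lemma mem_corePoly_piBLO : piBLO c L ∈ CorePoly (coalW (valuation c L)) := by
  refine mem_corePoly_of_prices piBLO_nonneg (fun _ => by positivity) valuation_le_piBLO ?_
  rw [coalW_univ, sum_piBLO, sum_const, card_univ, Fintype.card_fin, nsmul_eq_mul]
  push_cast
  linarith

lemma sum_priceMRC : ∑ x, priceMRC c L x = c * ((c : ℝ) + 2) + L := by
  simp [priceMRC, Fin.sum_univ_add]; ring

lemma valuation_le_piMRC (i : Fin (c + L + L)) (A : Finset (Fin (c + L))) :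
    valuation c L i A ≤ piMRC c L i + ∑ x ∈ A, priceMRC c L x := by
  refine singleMinded_le (piMRC_nonneg i) priceMRC_nonneg ?_ A
  rcases lt_or_ge (i : ℕ) (c + L) with hw | hl
  · rw [sum_bundle, dif_pos hw]
    simp only [bid, piMRC, priceMRC, middle, mem_filter, mem_univ, true_and, if_pos hw]
    split_ifs <;> first | linarith | omega
  · have hitem : ¬ (i : ℕ) - L < c := by omega
    have hshared : ∑ x ∈ sharedItems c L, priceMRC c L x = c * ((c : ℝ) + 2) :=
      calc ∑ x ∈ sharedItems c L, priceMRC c L x = ∑ _x ∈ sharedItems c L, ((c : ℝ) + 2) :=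
            sum_congr rfl fun x hx => if_pos (by simpa [sharedItems] using hx)
        _ = c * ((c : ℝ) + 2) := by simp [card_sharedItems]; ring
    rw [sum_bundle, dif_neg hl.not_gt, hshared]
    simp only [bid, piMRC, priceMRC, middle, mem_filter, mem_univ, true_and, if_neg hl.not_gt,
      if_neg hitem, if_neg (by omega : ¬ (c ≤ (i : ℕ) ∧ (i : ℕ) < c + L))]
    linarith

lemma sum_piMRC : ∑ i, piMRC c L i = (c + 1) * (L : ℝ) := by
  simp [piMRC, sum_ite_mem, card_middle]; ring

lemma mem_corePoly_piMRC : piMRC c L ∈ CorePoly (coalW (valuation c L)) := by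
  refine mem_corePoly_of_prices piMRC_nonneg priceMRC_nonneg valuation_le_piMRC ?_
  rw [coalW_univ, sum_piMRC, sum_priceMRC]
  linarith

-- The witness serves loser `j + L` and all middle winners other than `j`.
lemma coalW_sdiff_rivals {j : Fin (c + L + L)} (hj : j ∈ middle c L) :
    ((L : ℝ) - 1) * (c + 2) + (c + 1) ^ 2 ≤ coalW (valuation c L) (univ \ rivals c L j) := by
  have hj' : c ≤ (j : ℕ) ∧ (j : ℕ) < c + L := by simpa [middle] using hj
  set ℓ : Fin (c + L + L) := ⟨j + L, by omega⟩ with hℓ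
  have hℓP : ℓ ∉ (middle c L).erase j := by simp [ℓ, middle]; omega
  have hP : IsAlloc (insert ℓ ((middle c L).erase j)) (bundle c L) := by
    intro a ha b hb hab
    rw [disjoint_left]
    intro x hxa hxb
    simp only [mem_insert, mem_erase, middle, mem_filter, mem_univ, true_and, mem_bundle,
      Fin.ext_iff, hℓ] at ha hb hxa hxb hab
    omega
  have hPS : insert ℓ ((middle c L).erase j) ⊆ univ \ rivals c L j := by
    intro a ha
    simp only [mem_insert, mem_erase, middle, mem_filter, mem_univ, true_and, mem_sdiff, rivals,
      sharedWinners, Fin.ext_iff, hℓ] at ha ⊢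
    omega
  have hbid : ∑ i ∈ (middle c L).erase j, bid c L i = ((L : ℝ) - 1) * (c + 2) := by
    calc ∑ i ∈ (middle c L).erase j, bid c L i = ∑ _i ∈ (middle c L).erase j, ((c : ℝ) + 2) :=
          sum_congr rfl fun i hi => if_pos (by simp [middle] at hi; omega)
      _ = ((L : ℝ) - 1) * (c + 2) := by
          rw [sum_const, card_erase_of_mem hj, card_middle, nsmul_eq_mul, Nat.cast_sub (by omega)]
          simp
  calc ((L : ℝ) - 1) * (c + 2) + (c + 1) ^ 2
        = ∑ i ∈ insert ℓ ((middle c L).erase j), bid c L i := by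
        rw [sum_insert hℓP, hbid, bid, if_neg (show ¬ (ℓ : ℕ) < c + L by simp [ℓ]; omega)]
        ring
    _ ≤ _ := sum_le_coalW_singleMinded bid_nonneg hPS hP

lemma eq_zero_of_mem_corePoly {π : Fin (c + L + L) → ℝ} (hπ : π ∈ CorePoly (coalW (valuation c L)))
    {i : Fin (c + L + L)} (hi : c + L ≤ (i : ℕ)) : π i = 0 := by
  have h := sum_le_of_mem_corePoly hπ {i}
  rw [sum_singleton] at h
  linarith [hπ.1 i, coalW_univ_le_sdiff_loser hi]

lemma sum_rivals_le {π : Fin (c + L + L) → ℝ} (hπ : π ∈ CorePoly (coalW (valuation c L)))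
    {j : Fin (c + L + L)} (hj : j ∈ middle c L) : ∑ i ∈ rivals c L j, π i ≤ c + 1 := by
  have h := sum_le_of_mem_corePoly hπ (rivals c L j)
  rw [coalW_univ] at h
  nlinarith [coalW_sdiff_rivals hj]

lemma exists_mem_rivals (hL : 1 ≤ L) {i : Fin (c + L + L)} (hi : (i : ℕ) < c + L) :
    ∃ j ∈ middle c L, i ∈ rivals c L j := by
  by_cases hic : (i : ℕ) < c
  · exact ⟨⟨c, by omega⟩, by simp [middle]; omega, by simp [rivals, sharedWinners, hic]⟩
  · exact ⟨i, by simp [middle]; omega, mem_insert_self _ _⟩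

lemma sum_le_sum_piMRC (hL : 1 ≤ L) {π : Fin (c + L + L) → ℝ}
    (hπ : π ∈ CorePoly (coalW (valuation c L))) : ∑ i, π i ≤ ∑ i, piMRC c L i := by
  have hcover : ∀ i, π i ≤ ∑ j ∈ middle c L, if i ∈ rivals c L j then π i else 0 := by
    intro i
    rcases lt_or_ge (i : ℕ) (c + L) with hi | hi
    · obtain ⟨j, hj, hij⟩ := exists_mem_rivals hL hi
      calc π i = if i ∈ rivals c L j then π i else 0 := (if_pos hij).symm
        _ ≤ _ := single_le_sum (f := fun j => if i ∈ rivals c L j then π i else 0)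
            (fun j _ => by split_ifs <;> simp [hπ.1 i]) hj
    · rw [eq_zero_of_mem_corePoly hπ hi]
      simp
  calc ∑ i, π i ≤ ∑ i, ∑ j ∈ middle c L, if i ∈ rivals c L j then π i else 0 :=
        sum_le_sum fun i _ => hcover i
    _ = ∑ j ∈ middle c L, ∑ i ∈ rivals c L j, π i := by rw [sum_comm]; simp [sum_ite_mem]
    _ ≤ ∑ _j ∈ middle c L, ((c : ℝ) + 1) := sum_le_sum fun j hj => sum_rivals_le hπ hj
    _ = ∑ i, piMRC c L i := by rw [sum_piMRC]; simp [card_middle]; ring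

lemma card_rivals {j : Fin (c + L + L)} (hj : j ∈ middle c L) : #(rivals c L j) = c + 1 := by
  simp only [middle, mem_filter, mem_univ, true_and] at hj
  rw [rivals, card_insert_of_notMem (by simp [sharedWinners]; omega), card_sharedWinners]

lemma filter_piBLO_le_subset {π : Fin (c + L + L) → ℝ}
    (hπ : π ∈ CorePoly (coalW (valuation c L))) {s : ℝ} (hs : s < 1) :
    (univ.filter fun i => piBLO c L i ≤ s) ⊆ univ.filter fun i => π i ≤ s := by
  intro i hi
  rw [mem_filter] at hi ⊢
  simp only [piBLO] at hi
  split_ifs at hi with hw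
  · linarith [hi.2]
  · rw [eq_zero_of_mem_corePoly hπ (by omega)]
    exact ⟨mem_univ _, hi.2⟩

lemma add_le_sum_rivals {π : Fin (c + L + L) → ℝ} {j i : Fin (c + L + L)} (hj : j ∈ middle c L)
    (hi : i ∈ rivals c L j) (hπ : ∀ i' ∈ rivals c L j, 1 ≤ π i') :
    π i + c ≤ ∑ i' ∈ rivals c L j, π i' := by
  have h := card_nsmul_le_sum ((rivals c L j).erase i) π 1 fun i' hi' =>
    hπ i' (mem_of_mem_erase hi')
  rw [card_erase_of_mem hi, card_rivals hj] at h
  rw [← add_sum_erase _ _ hi]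
  simpa using h

lemma not_lexDom_piBLO (hL : 1 ≤ L) {π : Fin (c + L + L) → ℝ}
    (hπ : π ∈ CorePoly (coalW (valuation c L))) : ¬ LexDom π (piBLO c L) := by
  intro hdom
  obtain ⟨s, hlt, hle⟩ := hdom.exists_threshold
  have hs : 1 ≤ s := by
    by_contra! h
    exact (card_le_card (filter_piBLO_le_subset hπ h)).not_gt hlt
  have hwin : ∀ i : Fin (c + L + L), (i : ℕ) < c + L → 1 ≤ π i := by
    intro i hi
    by_contra! h
    refine (hle (π i) (h.trans_le hs)).not_gt (card_lt_card ?_)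
    refine (ssubset_iff_of_subset (filter_piBLO_le_subset hπ h)).2 ⟨i, by simp, ?_⟩
    rw [mem_filter, piBLO, if_pos hi]
    simp [h]
  obtain ⟨i, hi⟩ : ∃ i, s < π i := by
    by_contra! h
    rw [filter_true_of_mem fun i _ => h i, card_univ] at hlt
    exact (card_le_univ _).not_gt hlt
  have hiw : (i : ℕ) < c + L := by
    by_contra! h
    linarith [eq_zero_of_mem_corePoly hπ h]
  obtain ⟨j, hj, hij⟩ := exists_mem_rivals hL hiw
  have hrivals : ∀ i' ∈ rivals c L j, 1 ≤ π i' := by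
    intro i' hi'
    simp only [middle, mem_filter, mem_univ, true_and] at hj
    simp only [rivals, sharedWinners, mem_insert, mem_filter, mem_univ, true_and] at hi'
    exact hwin i' (by rcases hi' with rfl | h <;> omega)
  linarith [add_le_sum_rivals hj hij hrivals, sum_rivals_le hπ hj]

end TightAuction

lemma exists_half_split (k : ℕ) (hk : 1 ≤ k) :
    ∃ c L : ℕ, k = c + L ∧ 1 ≤ L ∧
      (k : ℝ) ^ 2 + 2 * k + ((k % 2 : ℕ) : ℝ) = 4 * ((c + 1) * L) := by
  obtain ⟨q, rfl | rfl⟩ := Nat.even_or_odd' k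
  · refine ⟨q, q, by ring, by omega, ?_⟩
    simp [Nat.mul_mod_right]
    ring
  · refine ⟨q, q + 1, by ring, by omega, ?_⟩
    simp [Nat.add_mod]
    ring

open TightAuction

/-- Tightness of the total-utility bound for the BLO outcome. -/
theorem blo_total_utility_bound_tight (k : ℕ) (hk : 3 ≤ k) :
    ∃ (n m : ℕ) (v : Fin n → Finset (Fin m) → ℝ),
      (∀ i, v i ∅ = 0) ∧ (∀ i S, 0 ≤ v i S) ∧ (winners v).card = k ∧
      ∃ πB πM : Fin n → ℝ,
        (πB ∈ CorePoly (coalW v) ∧ ∀ π' ∈ CorePoly (coalW v), ¬ LexDom π' πB) ∧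
        (πM ∈ CorePoly (coalW v) ∧ ∀ π' ∈ CorePoly (coalW v), ∑ i, π' i ≤ ∑ i, πM i) ∧
        (∑ i, πB i) = (4 * (k : ℝ)) / ((k : ℝ) ^ 2 + 2 * (k : ℝ) + ((k % 2 : ℕ) : ℝ)) * ∑ i, πM i ∧
        0 < ∑ i, πM i := by
  obtain ⟨c, L, rfl, hL, hden⟩ := exists_half_split k (by omega)
  have hMRC : 0 < ∑ i, piMRC c L i := by
    rw [sum_piMRC]
    exact mul_pos (by positivity) (by exact_mod_cast hL)
  refine ⟨c + L + L, c + L, valuation c L, fun i => singleMinded_empty (bundle_nonempty i),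
    fun i A => singleMinded_nonneg (bid_nonneg i) A, by rw [winners_eq, card_winnerSet],
    piBLO c L, piMRC c L, ⟨mem_corePoly_piBLO, fun π hπ => not_lexDom_piBLO hL hπ⟩,
    ⟨mem_corePoly_piMRC, fun π hπ => sum_le_sum_piMRC hL hπ⟩, ?_, hMRC⟩
  rw [hden, sum_piBLO, sum_piMRC]
  push_cast
  field_simp
end
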